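/- arXiv:2207.04943 — 8 statements merged into one kernel-verified Lean document; each statement's English description precedes it below -/
import Mathlib

section
/- Let k ≥ 0 and x_max ≥ 0 be real numbers. Then for every real x with x ≤ x_max, the Darcy–Weisbach head-loss value k·x·|x| satisfies the first quasi-convex-hull inequality: k·x·|x| ≤ (2√2 − 2)·k·x_max·x + (3 − 2√2)·k·x_max². -/
/-- First quasi-convex-hull inequality for the Darcy–Weisbach head loss:
for `k ≥ 0`, `x_max ≥ 0` and any flow `x ≤ x_max`,
`k·x·|x| ≤ (2√2 − 2)·k·x_max·x + (3 − 2√2)·k·x_max²`. -/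
theorem darcy_weisbach_qch_first (k xmax : ℝ) (hk : 0 ≤ k) (hxmax : 0 ≤ xmax) :
    ∀ x : ℝ, x ≤ xmax →
      k * x * |x| ≤ (2 * Real.sqrt 2 - 2) * k * xmax * x
        + (3 - 2 * Real.sqrt 2) * k * xmax ^ 2 := by
  intro x hx
  have h2 : Real.sqrt 2 ^ 2 = 2 := Real.sq_sqrt (by norm_num)
  have h1 : (1:ℝ) ≤ Real.sqrt 2 := by
    nlinarith [Real.sqrt_nonneg 2]
  rcases abs_cases x with ⟨ha, hx0⟩ | ⟨ha, hx0⟩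
  · rw [ha]
    nlinarith [mul_nonneg hk (mul_nonneg (sub_nonneg.2 hx) (by nlinarith : (0:ℝ) ≤ x + (3 - 2*Real.sqrt 2) * xmax))]
  · rw [ha]
    nlinarith [mul_nonneg hk (sq_nonneg (x + (Real.sqrt 2 - 1) * xmax)), mul_nonneg (mul_nonneg hk hxmax) hxmax, sq_nonneg (x + (Real.sqrt 2 - 1) * xmax)]
end

section
/- Let k ≥ 0 and x_min ≤ 0 be real numbers. Then for every real x with x_min ≤ x, the Darcy–Weisbach head-loss value k·x·|x| satisfies the second quasi-convex-hull inequality: k·x·|x| ≥ (2√2 − 2)·k·|x_min|·x − (3 − 2√2)·k·x_min². -/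
/-- Second quasi-convex-hull inequality for the Darcy–Weisbach head loss:
for `k ≥ 0`, `x_min ≤ 0` and any flow `x ≥ x_min`,
`k·x·|x| ≥ (2√2 − 2)·k·|x_min|·x − (3 − 2√2)·k·x_min²`. -/
theorem darcy_weisbach_qch_second (k xmin : ℝ) (hk : 0 ≤ k) (hxmin : xmin ≤ 0) :
    ∀ x : ℝ, xmin ≤ x →
      k * x * |x| ≥ (2 * Real.sqrt 2 - 2) * k * |xmin| * x
        - (3 - 2 * Real.sqrt 2) * k * xmin ^ 2 := by
  intro x hx
  have hs : Real.sqrt 2 ^ 2 = 2 := Real.sq_sqrt (by norm_num)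
  have hs1 : (1:ℝ) ≤ Real.sqrt 2 := by
    nlinarith [Real.sqrt_nonneg 2]
  have hs2 : Real.sqrt 2 ≤ 1.5 := by nlinarith [Real.sqrt_nonneg 2]
  rw [abs_of_nonpos hxmin]
  rcases le_or_gt 0 x with hx0 | hx0
  · rw [abs_of_nonneg hx0]
    have key : k * x * x - ((2 * Real.sqrt 2 - 2) * k * (-xmin) * x
        - (3 - 2 * Real.sqrt 2) * k * xmin ^ 2)
        = k * (x + (Real.sqrt 2 - 1) * xmin) ^ 2 := by
      linear_combination (-(k * xmin ^ 2)) * hs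
    nlinarith [mul_nonneg hk (sq_nonneg (x + (Real.sqrt 2 - 1) * xmin))]
  · rw [abs_of_neg hx0]
    have h1 : (0:ℝ) ≤ x - xmin := by linarith
    have h2 : (0:ℝ) ≤ -(x + (3 - 2 * Real.sqrt 2) * xmin) := by nlinarith
    nlinarith [mul_nonneg (mul_nonneg hk h1) h2]
end

section
/- Let k ≥ 0 and x_max ≥ 0 be real numbers. Then for every real x with x ≥ −(1 + √2)·x_max, the Darcy–Weisbach head-loss value k·x·|x| satisfies the third quasi-convex-hull inequality: k·x·|x| ≥ 2·k·x_max·x − k·x_max². In particular, if the lower flow limit satisfies x_min ≥ −(1 + √2)·x_max, the inequality holds for all x in the flow range [x_min, x_max]. -/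
lemma qch_aux (k xmax : ℝ) (hk : 0 ≤ k) (hxmax : 0 ≤ xmax) (x : ℝ)
    (hx : -(1 + Real.sqrt 2) * xmax ≤ x) :
    k * x * |x| ≥ 2 * k * xmax * x - k * xmax ^ 2 := by
  have hs : Real.sqrt 2 ^ 2 = 2 := Real.sq_sqrt (by norm_num)
  have hs0 : 0 ≤ Real.sqrt 2 := Real.sqrt_nonneg 2
  have h1 : 1 ≤ Real.sqrt 2 := by
    nlinarith [Real.sq_sqrt (by norm_num : (2:ℝ) ≥ 0), Real.sqrt_nonneg 2]
  rcases abs_cases x with ⟨he, h2⟩ | ⟨he, h2⟩ <;> rw [he]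
  · nlinarith [mul_nonneg hk (sq_nonneg (x - xmax))]
  · have ha : 0 ≤ x + (1 + Real.sqrt 2) * xmax := by linarith
    have hb : 0 ≤ (Real.sqrt 2 - 1) * xmax - x := by nlinarith
    have key : k * ((x + (1 + Real.sqrt 2) * xmax) * ((Real.sqrt 2 - 1) * xmax - x))
        = k * ((Real.sqrt 2 ^ 2 - 1) * xmax ^ 2 - 2 * xmax * x - x ^ 2) := by ring
    rw [hs] at key
    nlinarith [mul_nonneg hk (mul_nonneg ha hb)]

/-- Third quasi-convex-hull inequality for the Darcy–Weisbach head loss: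
for `k ≥ 0`, `x_max ≥ 0` and any flow `x ≥ −(1+√2)·x_max`,
`k·x·|x| ≥ 2·k·x_max·x − k·x_max²`; in particular the inequality holds on any
flow range `[x_min, x_max]` with `x_min ≥ −(1+√2)·x_max`. -/
theorem darcy_weisbach_qch_third (k xmax : ℝ) (hk : 0 ≤ k) (hxmax : 0 ≤ xmax) :
    (∀ x : ℝ, -(1 + Real.sqrt 2) * xmax ≤ x →
      k * x * |x| ≥ 2 * k * xmax * x - k * xmax ^ 2) ∧
    (∀ xmin : ℝ, -(1 + Real.sqrt 2) * xmax ≤ xmin →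
      ∀ x : ℝ, xmin ≤ x → x ≤ xmax →
        k * x * |x| ≥ 2 * k * xmax * x - k * xmax ^ 2) := by
  refine ⟨fun x hx => qch_aux k xmax hk hxmax x hx,
    fun xmin hmin x hx1 _ => qch_aux k xmax hk hxmax x (le_trans hmin hx1)⟩
end

section
/- Let k ≥ 0 and x_min ≤ 0 be real numbers. Then for every real x with x ≤ (1 + √2)·|x_min|, the Darcy–Weisbach head-loss value k·x·|x| satisfies the fourth quasi-convex-hull inequality: k·x·|x| ≤ 2·k·|x_min|·x + k·x_min². In particular, if the upper flow limit satisfies x_max ≤ (1 + √2)·|x_min|, the inequality holds for all x in the flow range [x_min, x_max]. -/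
/-- Fourth quasi-convex-hull inequality for the Darcy–Weisbach head loss:
for `k ≥ 0`, `x_min ≤ 0` and any flow `x ≤ (1+√2)·|x_min|`,
`k·x·|x| ≤ 2·k·|x_min|·x + k·x_min²`; in particular the inequality holds on any
flow range `[x_min, x_max]` with `x_max ≤ (1+√2)·|x_min|`. -/
theorem darcy_weisbach_qch_fourth (k xmin : ℝ) (hk : 0 ≤ k) (hxmin : xmin ≤ 0) :
    (∀ x : ℝ, x ≤ (1 + Real.sqrt 2) * |xmin| →
      k * x * |x| ≤ 2 * k * |xmin| * x + k * xmin ^ 2) ∧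
    (∀ xmax : ℝ, xmax ≤ (1 + Real.sqrt 2) * |xmin| →
      ∀ x : ℝ, xmin ≤ x → x ≤ xmax →
        k * x * |x| ≤ 2 * k * |xmin| * x + k * xmin ^ 2) := by
  have key : ∀ x : ℝ, x ≤ (1 + Real.sqrt 2) * |xmin| →
      k * x * |x| ≤ 2 * k * |xmin| * x + k * xmin ^ 2 := by
    intro x hx
    have hm : |xmin| = -xmin := abs_of_nonpos hxmin
    have hs : Real.sqrt 2 * Real.sqrt 2 = 2 :=
      Real.mul_self_sqrt (by norm_num)
    have hs0 : 0 ≤ Real.sqrt 2 := Real.sqrt_nonneg 2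
    rcases le_or_gt x 0 with h | h
    · rw [hm] at hx ⊢; rw [abs_of_nonpos h]
      nlinarith [sq_nonneg (x - xmin), mul_nonneg hk (sq_nonneg (x - xmin))]
    · rw [hm] at hx ⊢; rw [abs_of_pos h]
      nlinarith [mul_nonneg hk (mul_nonneg h.le (sub_nonneg.2 hxmin)),
        mul_nonneg hk (mul_nonneg (mul_nonneg hs0 h.le) (sub_nonneg.2 hxmin)),
        mul_nonneg hk (mul_nonneg (sub_nonneg.2 hx) (sub_nonneg.2 hxmin)),
        mul_nonneg hk (mul_nonneg hs0 (mul_nonneg (sub_nonneg.2 hx) h.le))]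
    
  exact ⟨key, fun xmax hxmax x _ hxu => key x (hxu.trans hxmax)⟩
end

section
/- Let k ≥ 0 and let x_min ≤ 0 ≤ x_max be real flow limits satisfying |x_min| ≤ (1 + √2)·x_max and x_max ≤ (1 + √2)·|x_min|. Then for every x ∈ [x_min, x_max], the point (ΔH, x) with ΔH = k·x·|x| satisfies all four inequalities of the quasi-convex hull relaxation: (i) ΔH ≤ (2√2−2)·k·x_max·x + (3−2√2)·k·x_max², (ii) ΔH ≥ (2√2−2)·k·|x_min|·x − (3−2√2)·k·x_min², (iii) ΔH ≥ 2·k·x_max·x − k·x_max², and (iv) ΔH ≤ 2·k·|x_min|·x + k·x_min². Hence the quasi-convex hull is a valid convex relaxation of the Darcy–Weisbach head-loss equation on the flow range. -/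
/-- Validity of the full quasi-convex hull relaxation of the Darcy–Weisbach head-loss
equation: for `k ≥ 0` and flow limits `x_min ≤ 0 ≤ x_max` with
`|x_min| ≤ (1+√2)·x_max` and `x_max ≤ (1+√2)·|x_min|`, every flow `x ∈ [x_min, x_max]`
and the head loss `ΔH = k·x·|x|` satisfy all four linear inequalities. -/
theorem darcy_weisbach_qch_valid (k xmin xmax : ℝ) (hk : 0 ≤ k)
    (hxmin : xmin ≤ 0) (hxmax : 0 ≤ xmax)
    (h1 : |xmin| ≤ (1 + Real.sqrt 2) * xmax)
    (h2 : xmax ≤ (1 + Real.sqrt 2) * |xmin|) :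
    ∀ x : ℝ, xmin ≤ x → x ≤ xmax →
      k * x * |x| ≤ (2 * Real.sqrt 2 - 2) * k * xmax * x
          + (3 - 2 * Real.sqrt 2) * k * xmax ^ 2 ∧
      k * x * |x| ≥ (2 * Real.sqrt 2 - 2) * k * |xmin| * x
          - (3 - 2 * Real.sqrt 2) * k * xmin ^ 2 ∧
      k * x * |x| ≥ 2 * k * xmax * x - k * xmax ^ 2 ∧
      k * x * |x| ≤ 2 * k * |xmin| * x + k * xmin ^ 2 := by
  intro x hx1 hx2
  have habs : |xmin| = -xmin := abs_of_nonpos hxmin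
  set s := Real.sqrt 2 with hsdef
  have hs2 : s ^ 2 = 2 := Real.sq_sqrt (by norm_num)
  have hs0 : 0 ≤ s := Real.sqrt_nonneg 2
  have hs1 : 1 ≤ s := by nlinarith
  have hs32 : s ≤ 3 / 2 := by nlinarith
  rw [habs] at h1 h2 ⊢
  rcases le_or_gt 0 x with hx | hx
  · rw [abs_of_nonneg hx]
    refine ⟨?_, ?_, ?_, ?_⟩
    · nlinarith [mul_nonneg hk (mul_nonneg (show (0:ℝ) ≤ xmax - x by linarith)
        (show (0:ℝ) ≤ x - (2 * s - 3) * xmax by nlinarith))]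
    · nlinarith [mul_nonneg hk (sq_nonneg (x - (s - 1) * (-xmin))),
        mul_nonneg hk (sq_nonneg xmin), hs2]
    · nlinarith [mul_nonneg hk (sq_nonneg (x - xmax))]
    · nlinarith [mul_nonneg hk (mul_nonneg (show (0:ℝ) ≤ x - (1 - s) * (-xmin) by nlinarith)
        (show (0:ℝ) ≤ (1 + s) * (-xmin) - x by nlinarith)),
        mul_nonneg hk (sq_nonneg xmin), hs2]
  · rw [abs_of_neg hx]
    refine ⟨?_, ?_, ?_, ?_⟩
    · nlinarith [mul_nonneg hk (sq_nonneg (x + (s - 1) * xmax)),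
        mul_nonneg hk (sq_nonneg xmax), hs2]
    · nlinarith [mul_nonneg hk (mul_nonneg (show (0:ℝ) ≤ x - xmin by linarith)
        (show (0:ℝ) ≤ (3 - 2 * s) * (-xmin) - x by nlinarith))]
    · nlinarith [mul_nonneg hk (mul_nonneg (show (0:ℝ) ≤ x + (1 + s) * xmax by nlinarith)
        (show (0:ℝ) ≤ (s - 1) * xmax - x by nlinarith)),
        mul_nonneg hk (sq_nonneg xmax), hs2]
    · nlinarith [mul_nonneg hk (sq_nonneg (x - xmin))]
end

section
/- Let k > 0 and x_max > 0 be real numbers. Then equality holds in the first quasi-convex-hull inequality, i.e. k·x·|x| = (2√2 − 2)·k·x_max·x + (3 − 2√2)·k·x_max², if and only if x = x_max or x = −(√2 − 1)·x_max. In particular, the upper-bounding line of the relaxation touches the graph of the head-loss function at exactly two points. -/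
/-- Equality characterization for the first quasi-convex-hull inequality:
for `k > 0`, `x_max > 0`, the upper-bounding line touches the graph of the
Darcy–Weisbach head-loss function exactly at `x = x_max` and `x = −(√2−1)·x_max`. -/
theorem darcy_weisbach_qch_first_eq_iff (k xmax : ℝ) (hk : 0 < k) (hxmax : 0 < xmax) :
    ∀ x : ℝ,
      k * x * |x| = (2 * Real.sqrt 2 - 2) * k * xmax * x
          + (3 - 2 * Real.sqrt 2) * k * xmax ^ 2 ↔
        x = xmax ∨ x = -(Real.sqrt 2 - 1) * xmax := by
  have hs : Real.sqrt 2 ^ 2 = 2 := Real.sq_sqrt (by norm_num)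
  have hs1 : (1:ℝ) ≤ Real.sqrt 2 := by nlinarith [Real.sqrt_nonneg 2]
  have hs2 : Real.sqrt 2 ≤ 1.5 := by nlinarith [Real.sqrt_nonneg 2]
  intro x
  constructor
  · intro h
    have h' : x * |x| = (2 * Real.sqrt 2 - 2) * xmax * x
        + (3 - 2 * Real.sqrt 2) * xmax ^ 2 := by
      have h2 : k * (x * |x|) = k * ((2 * Real.sqrt 2 - 2) * xmax * x
          + (3 - 2 * Real.sqrt 2) * xmax ^ 2) := by linear_combination h
      exact mul_left_cancel₀ (ne_of_gt hk) h2
    rcases abs_cases x with ⟨ha, hx0⟩ | ⟨ha, hx0⟩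
    · rw [ha] at h'
      have hfac : (x - xmax) * (x - (2 * Real.sqrt 2 - 3) * xmax) = 0 := by
        nlinarith [h', hs]
      rcases mul_eq_zero.mp hfac with h1 | h2
      · left; linarith
      · exfalso
        have : x = (2 * Real.sqrt 2 - 3) * xmax := by linarith
        nlinarith
    · rw [ha] at h'
      right
      have hfac : (x + (Real.sqrt 2 - 1) * xmax) ^ 2 = 0 := by nlinarith [h', hs]
      have := pow_eq_zero_iff (n := 2) (by norm_num) |>.mp hfac
      linarith
  · rintro (rfl | rfl)
    · rw [abs_of_pos hxmax]; ring
    · have hneg : -(Real.sqrt 2 - 1) * xmax ≤ 0 := by nlinarith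
      rw [abs_of_nonpos hneg]; linear_combination (k * xmax ^ 2) * hs
end

section
/- Let k > 0 and x_max > 0 be real numbers. Then equality holds in the third quasi-convex-hull inequality, i.e. k·x·|x| = 2·k·x_max·x − k·x_max², if and only if x = x_max or x = −(1 + √2)·x_max. In particular, on any flow range [x_min, x_max] with x_min > −(1 + √2)·x_max, the tangent-type lower bound is tight only at the upper flow limit x_max. -/
/-- Equality characterization for the third quasi-convex-hull inequality:
for `k > 0`, `x_max > 0`, equality `k·x·|x| = 2·k·x_max·x − k·x_max²` holds iff
`x = x_max` or `x = −(1+√2)·x_max`; in particular, on a flow range `[x_min, x_max]`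
with `x_min > −(1+√2)·x_max`, the bound is tight only at `x = x_max`. -/
theorem darcy_weisbach_qch_third_eq_iff (k xmax : ℝ) (hk : 0 < k) (hxmax : 0 < xmax) :
    (∀ x : ℝ,
      k * x * |x| = 2 * k * xmax * x - k * xmax ^ 2 ↔
        x = xmax ∨ x = -(1 + Real.sqrt 2) * xmax) ∧
    (∀ xmin : ℝ, -(1 + Real.sqrt 2) * xmax < xmin →
      ∀ x : ℝ, xmin ≤ x → x ≤ xmax →
        (k * x * |x| = 2 * k * xmax * x - k * xmax ^ 2 ↔ x = xmax)) := by
  have hs2 : Real.sqrt 2 ^ 2 = 2 := Real.sq_sqrt (by norm_num)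
  have hs1 : 1 ≤ Real.sqrt 2 := by nlinarith [Real.sqrt_nonneg 2]
  have main : ∀ x : ℝ,
      k * x * |x| = 2 * k * xmax * x - k * xmax ^ 2 ↔
        x = xmax ∨ x = -(1 + Real.sqrt 2) * xmax := by
    intro x
    constructor
    · intro h
      rcases le_or_gt 0 x with hx | hx
      · left
        rw [abs_of_nonneg hx] at h
        have : k * (x - xmax) ^ 2 = 0 := by ring_nf; ring_nf at h; linarith
        have := mul_eq_zero.mp this
        rcases this with h' | h'
        · exact absurd h' (ne_of_gt hk)
        · have := pow_eq_zero_iff (n := 2) (by norm_num) |>.mp h'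
          linarith
      · right
        rw [abs_of_neg hx] at h
        have h0 : k * (x ^ 2 + 2 * xmax * x - xmax ^ 2) = 0 := by linear_combination -h
        have h1 : x ^ 2 + 2 * xmax * x - xmax ^ 2 = 0 :=
          (mul_eq_zero.mp h0).resolve_left hk.ne'
        have hz : (x - (Real.sqrt 2 - 1) * xmax) * (x + (1 + Real.sqrt 2) * xmax) = 0 := by
          linear_combination h1 - xmax ^ 2 * hs2
        rcases mul_eq_zero.mp hz with h' | h'
        · exfalso
          have : 0 ≤ (Real.sqrt 2 - 1) * xmax := by nlinarith
          nlinarith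
        · linarith
    · rintro (rfl | rfl)
      · rw [abs_of_pos hxmax]; ring
      · have hpos : 0 < (1 + Real.sqrt 2) * xmax := by nlinarith
        rw [abs_of_neg (by linarith : -(1 + Real.sqrt 2) * xmax < 0)]
        linear_combination -k * xmax ^ 2 * hs2
  refine ⟨main, fun xmin hxmin x hx1 hx2 => ?_⟩
  constructor
  · intro h
    rcases (main x).mp h with h' | h'
    · exact h'
    · exfalso; rw [h'] at hx1; linarith
  · intro h; exact (main x).mpr (Or.inl h)
end

section
/- Let μ ∈ ℝ, σ > 0, and let X be distributed according to the Gaussian measure on ℝ with mean μ and variance σ². Let ε ∈ (0, 1) and let q ∈ ℝ satisfy Φ(q) = 1 − ε, where Φ is the standard Gaussian cumulative distribution function. Then for all reals a, b, c with b ≠ 0: the lower-sided chance constraint P[c ≤ a + b·X] ≥ 1 − ε holds if and only if the deterministic constraint a + b·μ − q·|b|·σ ≥ c holds. -/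
open MeasureTheory ProbabilityTheory Set

/-! The law of `a + b X` is the Gaussian with mean `m = a + b μ` and standard deviation
`s = |b| σ`, which is the image of the standard Gaussian `Z` under `z ↦ m - s z`; hence
`P[c ≤ a + b X] = Φ((m - c) / s)`, and since `Φ` is strictly increasing,
`Φ(q) ≤ Φ((m - c) / s)` is equivalent to `m - q s ≥ c`. -/

lemma strictMono_cdf_of_absolutelyContinuous {P : Measure ℝ} [IsProbabilityMeasure P]
    (hP : volume ≪ P) : StrictMono (cdf P) := by
  intro x y hxy
  have hpos : 0 < P (Ioc x y) :=
    pos_iff_ne_zero.mpr fun h ↦ hxy.not_ge (by simpa using hP h)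
  rwa [← measure_cdf P, StieltjesFunction.measure_Ioc, ENNReal.ofReal_pos, sub_pos] at hpos

lemma gaussianReal_map_const_add_mul (m : ℝ) (v : NNReal) (a b : ℝ) :
    (gaussianReal m v).map (fun x ↦ a + b * x)
      = gaussianReal (a + b * m) (.mk (b ^ 2) (sq_nonneg b) * v) := by
  have hcomp : (fun x ↦ a + b * x) = (a + ·) ∘ (b * ·) := rfl
  rw [hcomp, ← Measure.map_map (by fun_prop) (by fun_prop), gaussianReal_map_const_mul,
    gaussianReal_map_const_add, add_comm]

lemma gaussianReal_Ici (m : ℝ) {s : ℝ} (hs : 0 < s) (c : ℝ) :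
    gaussianReal m (.mk (s ^ 2) (sq_nonneg s)) (Ici c)
      = ENNReal.ofReal (cdf (gaussianReal 0 1) ((m - c) / s)) := by
  have hstd : gaussianReal m (.mk (s ^ 2) (sq_nonneg s))
      = (gaussianReal 0 1).map (fun z ↦ m + -s * z) := by
    rw [gaussianReal_map_const_add_mul]
    congr 1
    · ring
    · ext; simp
  have hpre : (fun z ↦ m + -s * z) ⁻¹' Ici c = Iic ((m - c) / s) := by
    ext z
    simp only [mem_preimage, mem_Ici, mem_Iic, le_div_iff₀ hs]
    constructor <;> intro h <;> linarith
  rw [hstd, Measure.map_apply (by fun_prop) measurableSet_Ici, hpre, ofReal_cdf]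

theorem gaussian_chance_constraint_lower_general (μ σ : ℝ) (hσ : 0 < σ)
    (ε : ℝ) (q : ℝ)
    (hq : cdf (gaussianReal 0 1) q = 1 - ε)
    (a b c : ℝ) (hb : b ≠ 0) :
    ENNReal.ofReal (1 - ε)
        ≤ gaussianReal μ ⟨σ ^ 2, sq_nonneg σ⟩ {x : ℝ | c ≤ a + b * x}
      ↔ a + b * μ - q * |b| * σ ≥ c := by
  have hs : 0 < |b| * σ := by positivity
  have hlaw : gaussianReal μ ⟨σ ^ 2, sq_nonneg σ⟩ {x : ℝ | c ≤ a + b * x}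
      = gaussianReal (a + b * μ) (.mk ((|b| * σ) ^ 2) (sq_nonneg _)) (Ici c) := by
    have hvar : NNReal.mk (b ^ 2) (sq_nonneg b) * .mk (σ ^ 2) (sq_nonneg σ)
        = .mk ((|b| * σ) ^ 2) (sq_nonneg _) := by
      ext; simp [mul_pow]
    rw [← hvar, ← gaussianReal_map_const_add_mul,
      Measure.map_apply (by fun_prop) measurableSet_Ici]
    rfl
  have hΦ : StrictMono (cdf (gaussianReal 0 1)) :=
    strictMono_cdf_of_absolutelyContinuous (gaussianReal_absolutelyContinuous' 0 one_ne_zero)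
  rw [hlaw, gaussianReal_Ici _ hs, ENNReal.ofReal_le_ofReal_iff (cdf_nonneg _ _), ← hq,
    hΦ.le_iff_le, le_div_iff₀ hs, ge_iff_le, mul_assoc]
  constructor <;> intro h <;> linarith

/-- Analytical reformulation of a lower-sided scalar Gaussian chance constraint: for `X`
Gaussian with mean `μ`, variance `σ²` (`σ > 0`), `ε ∈ (0,1)`, `q` the `(1−ε)`-quantile
of the standard Gaussian (`Φ(q) = 1 − ε`) and `b ≠ 0`,
`P[c ≤ a + b·X] ≥ 1 − ε ↔ a + b·μ − q·|b|·σ ≥ c`. -/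
theorem gaussian_chance_constraint_lower (μ σ : ℝ) (hσ : 0 < σ)
    (ε : ℝ) (hε : ε ∈ Set.Ioo (0 : ℝ) 1) (q : ℝ)
    (hq : cdf (gaussianReal 0 1) q = 1 - ε)
    (a b c : ℝ) (hb : b ≠ 0) :
    ENNReal.ofReal (1 - ε)
        ≤ gaussianReal μ ⟨σ ^ 2, sq_nonneg σ⟩ {x : ℝ | c ≤ a + b * x}
      ↔ a + b * μ - q * |b| * σ ≥ c :=
  gaussian_chance_constraint_lower_general μ σ hσ ε q hq a b c hb
end
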